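/- arXiv:2511.03869 — 3 statements merged into one kernel-verified Lean document; each statement's English description precedes it below -/
import Mathlib

section
/- Let S be a restriction semigroup and let σ be the minimum congruence on S identifying all projections. Then a σ b if and only if there exists c ∈ S with c ≤ a and c ≤ b, where ≤ is the natural partial order. -/
/-- A restriction semigroup: an Ehresmann semigroup (a semigroup with a unary
operation `rstar` satisfying `x x* = x`, `x* y* = y* x* = (x* y*)*`, `(xy)* = (x* y)*`)
which additionally satisfies the identity `x* y = y (xy)*`. -/
class RestrictionSemigroup (S : Type*) extends Semigroup S where
  rstar : S → S
  mul_rstar_self : ∀ x : S, x * rstar x = x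
  rstar_comm : ∀ x y : S, rstar x * rstar y = rstar y * rstar x
  rstar_mul_proj : ∀ x y : S, rstar x * rstar y = rstar (rstar x * rstar y)
  rstar_mul : ∀ x y : S, rstar (x * y) = rstar (rstar x * y)
  restriction : ∀ x y : S, rstar x * y = y * rstar (x * y)

open RestrictionSemigroup

variable {S : Type*} [RestrictionSemigroup S]

/-- The natural partial order: `s ≤ t` iff `s = t s*`. -/
def rle (s t : S) : Prop := s = t * rstar s

/-- `r` is a congruence (with respect to multiplication and `*`) identifying all
projections. -/
def IsProjCong (r : S → S → Prop) : Prop :=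
  Equivalence r ∧
  (∀ a b c d : S, r a b → r c d → r (a * c) (b * d)) ∧
  (∀ a b : S, r a b → r (rstar a) (rstar b)) ∧
  (∀ a b : S, r (rstar a) (rstar b))

/-! Having a common lower bound in the natural partial order is itself a congruence identifying
all projections: transitivity holds because two lower bounds `c, d` of the same element satisfy
`c d* = d c*`, which is then a common lower bound of `c` and `d`; and `x* y*` lies below both
`x*` and `y*`. Conversely, in any congruence identifying projections, `c ≤ a` gives
`c = a c* ∼ a a* = a`. -/

lemma rstar_mul_rstar (x y : S) : rstar (x * rstar y) = rstar x * rstar y := by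
  rw [rstar_mul, ← rstar_mul_proj]

lemma rstar_mul_rstar_self (x : S) : rstar x * rstar x = rstar x := by
  rw [← rstar_mul_rstar, mul_rstar_self]

lemma rstar_rstar (x : S) : rstar (rstar x) = rstar x := by
  rw [← rstar_mul_rstar_self x, ← rstar_mul_proj]

lemma rstar_mul_rstar_mul (x y : S) : rstar y * rstar (x * y) = rstar (x * y) := by
  rw [rstar_comm, ← rstar_mul_rstar, mul_assoc, mul_rstar_self]

lemma rle_refl (a : S) : rle a a := (mul_rstar_self a).symm

lemma rstar_eq_of_rle {s t : S} (h : rle s t) : rstar s = rstar t * rstar s := by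
  conv_lhs => rw [h]
  exact rstar_mul_rstar t s

lemma rle_trans {s t u : S} (hst : rle s t) (htu : rle t u) : rle s u := by
  show s = u * rstar s
  rw [rstar_eq_of_rle hst, ← mul_assoc, ← htu]
  exact hst

lemma mul_rstar_rle (x y : S) : rle (x * rstar y) x := by
  show x * rstar y = x * rstar (x * rstar y)
  rw [rstar_mul_rstar, ← mul_assoc, mul_rstar_self]

lemma rle_rstar {s t : S} (h : rle s t) : rle (rstar s) (rstar t) := by
  show rstar s = rstar t * rstar (rstar s)
  rw [rstar_rstar]
  exact rstar_eq_of_rle h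

lemma rle_mul {s t u v : S} (hst : rle s t) (huv : rle u v) : rle (s * u) (t * v) := by
  show s * u = t * v * rstar (s * u)
  calc s * u = t * (rstar s * u) := by rw [← mul_assoc, ← hst]
    _ = t * (u * rstar (s * u)) := by rw [restriction]
    _ = t * (v * (rstar u * rstar (s * u))) := by rw [huv, mul_assoc, ← huv]
    _ = t * v * rstar (s * u) := by rw [rstar_mul_rstar_mul, mul_assoc]

lemma mul_rstar_comm_of_rle {c d b : S} (hc : rle c b) (hd : rle d b) :
    c * rstar d = d * rstar c := by
  calc c * rstar d = b * (rstar c * rstar d) := by rw [← mul_assoc, ← hc]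
    _ = b * (rstar d * rstar c) := by rw [rstar_comm]
    _ = d * rstar c := by rw [← mul_assoc, ← hd]

def HasCommonLowerBound (a b : S) : Prop := ∃ c : S, rle c a ∧ rle c b

lemma HasCommonLowerBound.trans {a b e : S} (hab : HasCommonLowerBound a b)
    (hbe : HasCommonLowerBound b e) : HasCommonLowerBound a e := by
  obtain ⟨c, hca, hcb⟩ := hab
  obtain ⟨d, hdb, hde⟩ := hbe
  refine ⟨c * rstar d, rle_trans (mul_rstar_rle c d) hca, ?_⟩
  rw [mul_rstar_comm_of_rle hcb hdb]
  exact rle_trans (mul_rstar_rle d c) hde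

lemma hasCommonLowerBound_rstar (x y : S) : HasCommonLowerBound (rstar x) (rstar y) := by
  refine ⟨rstar x * rstar y, mul_rstar_rle _ _, ?_⟩
  rw [rstar_comm, ← rstar_rstar x]
  exact mul_rstar_rle _ _

lemma isProjCong_hasCommonLowerBound : IsProjCong (HasCommonLowerBound (S := S)) := by
  refine ⟨⟨fun a => ⟨a, rle_refl a, rle_refl a⟩, fun ⟨c, hca, hcb⟩ => ⟨c, hcb, hca⟩,
    HasCommonLowerBound.trans⟩, ?_, ?_, hasCommonLowerBound_rstar⟩
  · rintro a b c d ⟨e, hea, heb⟩ ⟨f, hfc, hfd⟩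
    exact ⟨e * f, rle_mul hea hfc, rle_mul heb hfd⟩
  · rintro a b ⟨c, hca, hcb⟩
    exact ⟨rstar c, rle_rstar hca, rle_rstar hcb⟩

lemma IsProjCong.rel_of_rle {r : S → S → Prop} (hr : IsProjCong r) {c a : S} (h : rle c a) :
    r c a := by
  obtain ⟨hequiv, hmul, -, hproj⟩ := hr
  have := hmul a a (rstar c) (rstar a) (hequiv.refl a) (hproj c a)
  rwa [← h, mul_rstar_self] at this

/-- `a σ b` (where `σ` is the minimum congruence identifying all projections) iff
there exists `c` with `c ≤ a` and `c ≤ b` in the natural partial order. -/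
theorem stmt9 (a b : S) :
    (∀ r : S → S → Prop, IsProjCong r → r a b) ↔ ∃ c : S, rle c a ∧ rle c b := by
  refine ⟨fun h => h _ isProjCong_hasCommonLowerBound, ?_⟩
  rintro ⟨c, hca, hcb⟩ r hr
  exact hr.1.trans (hr.1.symm (hr.rel_of_rle hca)) (hr.rel_of_rle hcb)
end

section
/- Let E be a meet-semilattice and let 𝒜 be the collection of subsets of the character space of E of the form ⋃_{e∈Y} D_e for Y ⊆ E. The map Ψ : 𝒜 → {order ideals of E} given by Ψ(A) = {f ∈ E : D_f ⊆ A} is a bijection, with inverse I ↦ ⋃_{e∈I} D_e. -/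
/-!
Characters preserve meets, so `f ≤ e` gives `D_f ⊆ D_e`; hence `Ψ(A)` is an order ideal, and
`Y ⊆ Ψ(⋃_{e ∈ Y} D_e)` recovers `A`. Conversely, `D_f ⊆ ⋃_{e ∈ I} D_e` forces `f ≤ e` for some
`e ∈ I`: test the inclusion on the principal-filter character `χ_f`, which lies in `D_e` exactly
when `f ≤ e`; so `Ψ(⋃_{e ∈ I} D_e) = I` for an order ideal `I`.
-/

variable {E : Type*} [SemilatticeInf E]

/-- A character of a meet-semilattice `E`: a nonzero (`{0,1}`-valued, here
`Prop`-valued) meet-semilattice morphism. -/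
def IsChar (φ : E → Prop) : Prop :=
  (∃ x : E, φ x) ∧ ∀ a b : E, φ (a ⊓ b) ↔ φ a ∧ φ b

/-- `D_e`: the set of characters `φ` with `φ e = 1`. -/
def Dset (e : E) : Set {φ : E → Prop // IsChar φ} := {φ | φ.1 e}

/-- An order ideal of `E`: a downward closed subset. -/
def IsOrderIdealSet (I : Set E) : Prop := ∀ e ∈ I, ∀ f : E, f ≤ e → f ∈ I

def principalChar (f : E) : {φ : E → Prop // IsChar φ} :=
  ⟨(f ≤ ·), ⟨f, le_rfl⟩, fun _ _ => le_inf_iff⟩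

lemma principalChar_mem_Dset_iff {f e : E} : principalChar f ∈ Dset e ↔ f ≤ e := Iff.rfl

lemma Dset_mono {f e : E} (h : f ≤ e) : Dset f ⊆ Dset e := fun φ hφ =>
  ((φ.2.2 f e).1 (by rwa [inf_eq_left.2 h])).2

lemma Dset_subset_biUnion_Dset_iff {f : E} {Y : Set E} :
    Dset f ⊆ ⋃ e ∈ Y, Dset e ↔ ∃ e ∈ Y, f ≤ e := by
  constructor
  · intro h
    simpa only [Set.mem_iUnion₂, principalChar_mem_Dset_iff, exists_prop] using
      h (principalChar_mem_Dset_iff.2 le_rfl)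
  · rintro ⟨e, he, hfe⟩
    exact (Dset_mono hfe).trans (Set.subset_biUnion_of_mem he)

lemma isOrderIdealSet_setOf_Dset_subset (A : Set {φ : E → Prop // IsChar φ}) :
    IsOrderIdealSet {f : E | Dset f ⊆ A} :=
  fun _ he _ hfe => (Dset_mono hfe).trans he

lemma biUnion_setOf_Dset_subset {Y : Set E} :
    ⋃ e ∈ {f : E | Dset f ⊆ ⋃ e ∈ Y, Dset e}, Dset e = ⋃ e ∈ Y, Dset e := by
  apply Set.Subset.antisymm
  · exact Set.iUnion₂_subset fun _ he => he
  · exact Set.biUnion_subset_biUnion_left fun e he => Set.subset_biUnion_of_mem (u := Dset) he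

lemma setOf_Dset_subset_biUnion_Dset {I : Set E} (hI : IsOrderIdealSet I) :
    {f : E | Dset f ⊆ ⋃ e ∈ I, Dset e} = I := by
  ext f
  simp only [Set.mem_ofPred_eq, Dset_subset_biUnion_Dset_iff]
  exact ⟨fun ⟨e, he, hfe⟩ => hI e he f hfe, fun hf => ⟨f, hf, le_rfl⟩⟩

/-- The map `Ψ : A ↦ {f : D_f ⊆ A}`, from the collection of subsets of the
character space of the form `⋃_{e ∈ Y} D_e`, is a bijection onto the set of
order ideals of `E`, with inverse `I ↦ ⋃_{e ∈ I} D_e`. -/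
theorem stmt18 :
    (∀ A : Set {φ : E → Prop // IsChar φ},
      (∃ Y : Set E, A = ⋃ e ∈ Y, Dset e) → IsOrderIdealSet {f : E | Dset f ⊆ A}) ∧
    (∀ A : Set {φ : E → Prop // IsChar φ},
      (∃ Y : Set E, A = ⋃ e ∈ Y, Dset e) → (⋃ e ∈ {f : E | Dset f ⊆ A}, Dset e) = A) ∧
    (∀ I : Set E, IsOrderIdealSet I →
      {f : E | Dset f ⊆ ⋃ e ∈ I, Dset e} = I) := by
  refine ⟨fun A _ => isOrderIdealSet_setOf_Dset_subset A, ?_,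
    fun _ hI => setOf_Dset_subset_biUnion_Dset hI⟩
  rintro A ⟨Y, rfl⟩
  exact biUnion_setOf_Dset_subset
end

section
/- Let S be a proper restriction semigroup, T a monoid, and suppose S is built as the set of pairs {(t,e) : t ∈ T, e ∈ E, e ⊆ dom(α_t)} for a proper partial action α of T on a space X with semilattice E of subsets, with operations (s,e)(t,f) = (st, α_t⁻¹(e) ∩ f) and (s,e)* = (1,e). Then the relation (t,e) σ (s,f) iff t = s is precisely the minimum reduced congruence, and the resulting restriction semigroup is proper: (t,e) σ (s,f) together with (t,e)* = (s,f)* implies (t,e) = (s,f). -/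
/-! Proof idea: `(t, e) = (t, e)(1, e)`, and when `t = s` the products `(t, e)(1, f)` and
`(s, f)(1, e)` coincide (both are `(t, e ∩ f)`). A congruence identifying the projections
`(1, e)` and `(1, f)` therefore relates `(t, e) = (t, e)(1, e)` to `(t, e)(1, f) = (s, f)(1, e)`
and this to `(s, f)(1, f) = (s, f)`. Properness is immediate, since `(t, e)* = (1, e)`
remembers `e`. -/

/-- The data of a partial action of a monoid `T` on a set `X`: a domain
`dom t ⊆ X` and a map `act t` for each `t ∈ T`. -/
structure PartialActionData (T X : Type*) where
  dom : T → Set X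
  act : T → X → X

/-- `α` is a partial action: `α_1 = id_X` and `α_s ∘ α_t ≤ α_{st}` as partial
maps. -/
def IsPartialAction {T X : Type*} [Monoid T] (α : PartialActionData T X) : Prop :=
  α.dom 1 = Set.univ ∧ (∀ x : X, α.act 1 x = x) ∧
  ∀ s t : T, ∀ x ∈ α.dom t, α.act t x ∈ α.dom s →
    x ∈ α.dom (s * t) ∧ α.act (s * t) x = α.act s (α.act t x)

/-- `α` is proper with respect to `E`: each `dom α_t` is the union of the
members of `E` contained in it, and `α_t⁻¹(f) ∩ e ∈ E` whenever `e ∈ E`,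
`e ⊆ dom α_t` and `f ∈ E`. -/
def IsProperAction {T X : Type*} [Monoid T] (α : PartialActionData T X)
    (E : Set (Set X)) : Prop :=
  (∀ t : T, α.dom t = ⋃₀ {e ∈ E | e ⊆ α.dom t}) ∧
  (∀ t : T, ∀ e ∈ E, e ⊆ α.dom t → ∀ f ∈ E, {x | x ∈ e ∧ α.act t x ∈ f} ∈ E)

/-- The carrier of the partial action product: pairs `(t, e)` with `e ∈ E` and
`e ⊆ dom α_t`. -/
def Car {T X : Type*} [Monoid T] (α : PartialActionData T X) (E : Set (Set X)) :
    Set (T × Set X) :=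
  {p | p.2 ∈ E ∧ p.2 ⊆ α.dom p.1}

/-- The product `(s, e)(t, f) = (st, α_t⁻¹(e) ∩ f)`. -/
def pmul {T X : Type*} [Monoid T] (α : PartialActionData T X)
    (p q : T × Set X) : T × Set X :=
  (p.1 * q.1, {x | x ∈ q.2 ∧ α.act q.1 x ∈ p.2})

/-- The unary operation `(s, e)* = (1, e)`. -/
def pstar {T X : Type*} [Monoid T] (p : T × Set X) : T × Set X := (1, p.2)

/-- `r` is a congruence on the carrier (with respect to the product and `*`)
identifying all projections. -/
def IsProjCongOn {T X : Type*} [Monoid T] (α : PartialActionData T X)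
    (E : Set (Set X)) (r : T × Set X → T × Set X → Prop) : Prop :=
  (∀ p ∈ Car α E, r p p) ∧
  (∀ p q : T × Set X, r p q → r q p) ∧
  (∀ p q u : T × Set X, r p q → r q u → r p u) ∧
  (∀ p q p' q' : T × Set X, p ∈ Car α E → q ∈ Car α E → p' ∈ Car α E →
    q' ∈ Car α E → r p p' → r q q' → r (pmul α p q) (pmul α p' q')) ∧
  (∀ p q : T × Set X, p ∈ Car α E → q ∈ Car α E → r p q →
    r (pstar (T := T) (X := X) p) (pstar q)) ∧
  (∀ p q : T × Set X, p ∈ Car α E → q ∈ Car α E →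
    r (pstar (T := T) (X := X) p) (pstar q))

section

variable {T X : Type*} [Monoid T] {α : PartialActionData T X} {E : Set (Set X)}

theorem pstar_mem_car (hdom : α.dom 1 = Set.univ) {p : T × Set X} (hp : p ∈ Car α E) :
    pstar p ∈ Car α E :=
  ⟨hp.1, hdom ▸ Set.subset_univ _⟩

theorem pmul_pstar_self (hid : ∀ x, α.act 1 x = x) (p : T × Set X) :
    pmul α p (pstar p) = p :=
  Prod.ext (mul_one _) (Set.ext fun x => by simp [pmul, pstar, hid])

theorem pmul_pstar_comm (hid : ∀ x, α.act 1 x = x) {p q : T × Set X} (hpq : p.1 = q.1) :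
    pmul α p (pstar q) = pmul α q (pstar p) :=
  Prod.ext (by simp [pmul, pstar, hpq]) (Set.ext fun x => by simp [pmul, pstar, hid, and_comm])

theorem isProjCongOn_fst_eq : IsProjCongOn α E (fun p q => p.1 = q.1) :=
  ⟨fun _ _ => rfl, fun _ _ => Eq.symm, fun _ _ _ => Eq.trans,
    fun _ _ _ _ _ _ _ _ h₁ h₂ => by simp [pmul, h₁, h₂],
    fun _ _ _ _ _ => rfl, fun _ _ _ _ => rfl⟩

theorem rel_of_isProjCongOn_of_fst_eq {r : T × Set X → T × Set X → Prop}
    (hr : IsProjCongOn α E r) (hdom : α.dom 1 = Set.univ) (hid : ∀ x, α.act 1 x = x)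
    {p q : T × Set X} (hp : p ∈ Car α E) (hq : q ∈ Car α E) (hpq : p.1 = q.1) : r p q := by
  obtain ⟨hrefl, -, htrans, hmul, -, hproj⟩ := hr
  have hsp := pstar_mem_car hdom hp
  have hsq := pstar_mem_car hdom hq
  have hp' : r (pmul α p (pstar p)) (pmul α p (pstar q)) :=
    hmul _ _ _ _ hp hsp hp hsq (hrefl p hp) (hproj p q hp hq)
  have hq' : r (pmul α q (pstar p)) (pmul α q (pstar q)) :=
    hmul _ _ _ _ hq hsp hq hsq (hrefl q hq) (hproj p q hp hq)
  rw [pmul_pstar_self hid, pmul_pstar_comm hid hpq] at hp'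
  rw [pmul_pstar_self hid] at hq'
  exact htrans _ _ _ hp' hq'

theorem eq_of_fst_eq_of_pstar_eq {p q : T × Set X} (h₁ : p.1 = q.1)
    (h₂ : pstar (T := T) (X := X) p = pstar q) : p = q :=
  Prod.ext h₁ (Prod.ext_iff.mp h₂).2

end

theorem stmt19_general {T X : Type*} [Monoid T] (α : PartialActionData T X)
    (E : Set (Set X))
    (hact : IsPartialAction α) :
    IsProjCongOn α E (fun p q => p.1 = q.1) ∧
    (∀ r : T × Set X → T × Set X → Prop, IsProjCongOn α E r →
      ∀ p ∈ Car α E, ∀ q ∈ Car α E, p.1 = q.1 → r p q) ∧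
    (∀ p ∈ Car α E, ∀ q ∈ Car α E, p.1 = q.1 →
      pstar (T := T) (X := X) p = pstar q → p = q) :=
  ⟨isProjCongOn_fst_eq,
    fun _ hr _ hp _ hq hpq => rel_of_isProjCongOn_of_fst_eq hr hact.1 hact.2.1 hp hq hpq,
    fun _ _ _ _ => eq_of_fst_eq_of_pstar_eq⟩

/-- For the partial action product `S = {(t, e) : e ∈ E, e ⊆ dom α_t}` of a
proper partial action, the relation `(t, e) σ (s, f) ↔ t = s` is precisely the
minimum reduced congruence (it is a congruence identifying all projections, and
is contained in every such congruence), and the resulting restriction semigroup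
is proper: `(t,e) σ (s,f)` and `(t,e)* = (s,f)*` imply `(t,e) = (s,f)`. -/
theorem stmt19 {T X : Type*} [Monoid T] (α : PartialActionData T X)
    (E : Set (Set X)) (hE : ∀ e ∈ E, ∀ f ∈ E, e ∩ f ∈ E)
    (hact : IsPartialAction α) (hproper : IsProperAction α E) :
    IsProjCongOn α E (fun p q => p.1 = q.1) ∧
    (∀ r : T × Set X → T × Set X → Prop, IsProjCongOn α E r →
      ∀ p ∈ Car α E, ∀ q ∈ Car α E, p.1 = q.1 → r p q) ∧
    (∀ p ∈ Car α E, ∀ q ∈ Car α E, p.1 = q.1 →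
      pstar (T := T) (X := X) p = pstar q → p = q) :=
  stmt19_general α E hact
end
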